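/- arXiv:0707.2114 — 2 statements merged into one kernel-verified Lean document; each statement's English description precedes it below -/
import Mathlib

section
/- Assume A satisfies Cuntz–Krieger condition (I). Let u ∈ O_A be a partial isometry with u D_A u^* ⊆ D_A and u^* D_A u ⊆ D_A, so that u^*u = M_{χ_{X_u}} and uu^* = M_{χ_{Y_u}} for clopen subsets X_u, Y_u of X_A, and suppose h : X_u → Y_u is a homeomorphism such that u M_g u^* = M_{g ∘ h^{-1}} for every g ∈ C(X_A,ℂ) vanishing off X_u (with g ∘ h^{-1} extended by 0 off Y_u). Then for every x ∈ X_u and y = h(x), one has ‖T_{y_{[1,n]}}^* u T_{x_{[1,n]}}‖ = 1 for all n ∈ ℕ, where x_{[1,n]} = (x_1,…,x_n). -/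
open Matrix

/-- The one-sided topological Markov shift space `X_A` determined by a square matrix `A`
(with entries in `{0,1}`): sequences `x : ℕ → Fin N` with `A (x n) (x (n+1)) = 1` for all
`n`, carrying the (subspace of the) product topology. -/
abbrev MarkovShift {N : ℕ} (A : Matrix (Fin N) (Fin N) ℕ) : Type :=
  { x : ℕ → Fin N // ∀ n, A (x n) (x (n + 1)) = 1 }

/-- The shift transformation `σ_A`. -/
def mshift {N : ℕ} (A : Matrix (Fin N) (Fin N) ℕ) :
    MarkovShift A → MarkovShift A :=
  fun x => ⟨fun n => x.1 (n + 1), fun n => x.2 (n + 1)⟩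

/-- The orbit `orb_{σ_A}(x) = ⋃_{k≥0} ⋃_{l≥0} σ_A^{-k}(σ_A^l(x))` of `x`. -/
def orb {N : ℕ} (A : Matrix (Fin N) (Fin N) ℕ) (x : MarkovShift A) :
    Set (MarkovShift A) :=
  { y | ∃ k l : ℕ, (mshift A)^[k] y = (mshift A)^[l] x }

/-- The full group `[σ_A]`: homeomorphisms moving every point within its orbit. -/
def fullGroup {N : ℕ} (A : Matrix (Fin N) (Fin N) ℕ) :
    Set (MarkovShift A ≃ₜ MarkovShift A) :=
  { τ | ∀ x, τ x ∈ orb A x }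

/-- The topological full group `[σ_A]_c`: elements of the full group with continuous
orbit cocycles. -/
def topFullGroup {N : ℕ} (A : Matrix (Fin N) (Fin N) ℕ) :
    Set (MarkovShift A ≃ₜ MarkovShift A) :=
  { τ | τ ∈ fullGroup A ∧ ∃ k l : MarkovShift A → ℕ, Continuous k ∧ Continuous l ∧
      ∀ x, (mshift A)^[k x] (τ x) = (mshift A)^[l x] x }

/-- Cuntz–Krieger condition (I), formulated as: the shift space has no isolated points. -/
def ConditionI {N : ℕ} (A : Matrix (Fin N) (Fin N) ℕ) : Prop :=
  ∀ x : MarkovShift A, ¬ IsOpen ({x} : Set (MarkovShift A))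

noncomputable section

/-- The Hilbert space `ℓ²(X_A)` with orthonormal basis indexed by points of `X_A`. -/
abbrev MSHilbert {N : ℕ} (A : Matrix (Fin N) (Fin N) ℕ) : Type :=
  lp (fun _ : MarkovShift A => ℂ) 2

/-- The standard orthonormal basis vector `e_x` of `ℓ²(X_A)`. -/
def basisVec {N : ℕ} (A : Matrix (Fin N) (Fin N) ℕ) (x : MarkovShift A) :
    MSHilbert A :=
  letI : DecidableEq (MarkovShift A) := Classical.decEq _
  lp.single 2 x 1

/-- The point `ix = (i, x₁, x₂, …) ∈ X_A`, defined when `A(i, x₁) = 1`. -/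
def mcons {N : ℕ} (A : Matrix (Fin N) (Fin N) ℕ) (j : Fin N) (x : MarkovShift A)
    (h : A j (x.1 0) = 1) : MarkovShift A :=
  ⟨fun n => Nat.casesOn n j fun m => x.1 m, by
    intro n
    cases n with
    | zero => exact h
    | succ m => exact x.2 m⟩

/-- `T` acts on the basis by `T e_x = e_{ix}` if `ix ∈ X_A`, and `T e_x = 0` otherwise;
this is the defining property of the canonical generating partial isometry `T_i`. -/
def IsShiftOp {N : ℕ} (A : Matrix (Fin N) (Fin N) ℕ) (i : Fin N)
    (T : MSHilbert A →L[ℂ] MSHilbert A) : Prop :=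
  ∀ x : MarkovShift A,
    (∀ h : A i (x.1 0) = 1, T (basisVec A x) = basisVec A (mcons A i x h)) ∧
    (¬ A i (x.1 0) = 1 → T (basisVec A x) = 0)

/-- `T` is the family `T_1, …, T_N` of canonical generating partial isometries. -/
def IsGenFamily {N : ℕ} (A : Matrix (Fin N) (Fin N) ℕ)
    (T : Fin N → (MSHilbert A →L[ℂ] MSHilbert A)) : Prop :=
  ∀ i, IsShiftOp A i (T i)

/-- `M` assigns to every `f ∈ C(X_A, ℂ)` the multiplication operator `M_f`,
characterized by `M_f e_x = f(x) • e_x`. -/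
def IsMultOp {N : ℕ} (A : Matrix (Fin N) (Fin N) ℕ)
    (M : C(MarkovShift A, ℂ) → (MSHilbert A →L[ℂ] MSHilbert A)) : Prop :=
  ∀ (f : C(MarkovShift A, ℂ)) (x : MarkovShift A),
    M f (basisVec A x) = f x • basisVec A x

/-- The Cuntz–Krieger algebra `O_A`: the norm closure of the ∗-subalgebra of
`B(ℓ²(X_A))` generated by `T_1, …, T_N`. -/
def CKalg {N : ℕ} (A : Matrix (Fin N) (Fin N) ℕ)
    (T : Fin N → (MSHilbert A →L[ℂ] MSHilbert A)) :
    StarSubalgebra ℂ (MSHilbert A →L[ℂ] MSHilbert A) :=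
  (StarAlgebra.adjoin ℂ (Set.range T)).topologicalClosure

/-- The operator `T_{μ₁}⋯T_{μ_n}` associated to the word `μ₁⋯μ_n = (μ 0, …, μ (n-1))`. -/
def wordOp {N : ℕ} (A : Matrix (Fin N) (Fin N) ℕ)
    (T : Fin N → (MSHilbert A →L[ℂ] MSHilbert A)) (n : ℕ) (μ : ℕ → Fin N) :
    MSHilbert A →L[ℂ] MSHilbert A :=
  ((List.range n).map fun i => T (μ i)).prod

/-!
Write `y = h x` and `V = T_{y[1,n]}^* u T_{x[1,n]}`. Every factor of `V` is a partial
isometry, so `‖V‖ ≤ 1`. Conversely, `T_{y[1,n]} T_{y[1,n]}^*` is multiplication by the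
indicator `χ_C` of the cylinder `C` of `y[1,n]`; applying the covariance of `u` to the
function that equals `χ_C ∘ h` on `X_u` and vanishes off `X_u` shows that `u e_x` lies in
the range of this projection. Hence `V^* V` fixes the unit vector `e_{σⁿ x}`, and `‖V‖ ≥ 1`.
-/

open scoped InnerProductSpace

lemma IsClopen.exists_continuousMap_extension_by_zero {X R : Type*} [TopologicalSpace X]
    [TopologicalSpace R] [Zero R] {s : Set X} (hs : IsClopen s) (f : C(s, R)) :
    ∃ g : C(X, R), (∀ z : s, g z = f z) ∧ ∀ z ∉ s, g z = 0 := by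
  classical
  let g : X → R := fun z => if hz : z ∈ s then f ⟨z, hz⟩ else 0
  have hg : ContinuousOn g s :=
    continuousOn_iff_continuous_domRestrict.2 (by convert f.continuous with z; simp [g])
  refine ⟨⟨s.piecewise g 0, continuous_piecewise (by simp [hs.frontier_eq])
    (by rwa [hs.isClosed.closure_eq]) continuous_zero.continuousOn⟩,
    fun z => by simp [g], fun z hz => by simp [hz]⟩

lemma norm_le_one_of_mul_star_mul_self {E : Type*} [NonUnitalNormedRing E] [StarRing E]
    [CStarRing E] {u : E} (hu : u * star u * u = u) : ‖u‖ ≤ 1 := by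
  have hp : IsStarProjection (star u * u) :=
    ⟨by rw [IsIdempotentElem, ← mul_assoc, mul_assoc (star u) u, mul_assoc (star u), hu],
      .star_mul_self u⟩
  have h := hp.norm_le
  rw [CStarRing.norm_star_mul_self] at h
  nlinarith [norm_nonneg u]

lemma one_le_norm_of_star_mul_self_apply_eq {𝕜 E : Type*} [RCLike 𝕜] [NormedAddCommGroup E]
    [InnerProductSpace 𝕜 E] [CompleteSpace E] (V : E →L[𝕜] E) {e : E} (he : ‖e‖ = 1)
    (hV : (star V * V) e = e) : 1 ≤ ‖V‖ := by
  have hVe : ‖V e‖ = 1 := by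
    rw [V.apply_norm_eq_sqrt_inner_adjoint_left, ← ContinuousLinearMap.star_eq_adjoint]
    rw [show (star V ∘L V) e = e from hV, inner_self_eq_norm_sq, he]
    simp
  simpa [hVe, he] using V.le_opNorm e

lemma PiNat.isClopen_cylinder {E : ℕ → Type*} [∀ n, TopologicalSpace (E n)]
    [∀ n, DiscreteTopology (E n)] (x : ∀ n, E n) (n : ℕ) : IsClopen (PiNat.cylinder x n) := by
  refine ⟨?_, PiNat.isOpen_cylinder _ x n⟩
  rw [PiNat.cylinder_eq_pi]
  exact isClosed_set_pi fun i _ => isClosed_discrete _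

def clopenIndicator {X : Type*} [TopologicalSpace X] {s : Set X} (hs : IsClopen s) : C(X, ℂ) :=
  ⟨s.indicator 1, hs.continuous_indicator continuous_const⟩

section SequenceSpace

variable {N : ℕ} (A : Matrix (Fin N) (Fin N) ℕ)

open Classical in
lemma basisVec_apply (z w : MarkovShift A) : basisVec A z w = if w = z then 1 else 0 := by
  simp [basisVec, lp.single_apply, Pi.single_apply]

lemma inner_basisVec_left (z : MarkovShift A) (f : MSHilbert A) :
    ⟪basisVec A z, f⟫_ℂ = f z := by
  classical
  simp [basisVec, lp.inner_single_left, RCLike.inner_apply]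

lemma norm_basisVec (z : MarkovShift A) : ‖basisVec A z‖ = 1 := by
  simp [basisVec, lp.norm_single]

lemma star_apply_basisVec_apply (S : MSHilbert A →L[ℂ] MSHilbert A) (z w : MarkovShift A) :
    star S (basisVec A z) w = star (S (basisVec A w) z) := by
  rw [← inner_basisVec_left, ← inner_basisVec_left, ContinuousLinearMap.star_eq_adjoint,
    ContinuousLinearMap.adjoint_inner_right]
  exact (inner_conj_symm _ _).symm

lemma ext_basisVec {S S' : MSHilbert A →L[ℂ] MSHilbert A}
    (h : ∀ z, S (basisVec A z) = S' (basisVec A z)) : S = S' := by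
  let : DecidableEq (MarkovShift A) := Classical.decEq _
  refine ContinuousLinearMap.ext fun f => ?_
  have hf : HasSum (fun z => f z • basisVec A z) f := by
    convert lp.hasSum_single (by norm_num) f using 2 with z
    rw [basisVec, ← lp.single_smul, smul_eq_mul, mul_one]
  exact (hf.mapL S).unique (by simpa [h] using hf.mapL S')

lemma IsMultOp.mul {M : C(MarkovShift A, ℂ) → (MSHilbert A →L[ℂ] MSHilbert A)}
    (hM : IsMultOp A M) (f g : C(MarkovShift A, ℂ)) : M f * M g = M (f * g) :=
  ext_basisVec A fun z => by
    rw [mul_apply_eq_comp, hM, map_smul, hM, hM, smul_smul, ContinuousMap.mul_apply,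
      mul_comm]

end SequenceSpace

section ShiftOperators

variable {N : ℕ} (A : Matrix (Fin N) (Fin N) ℕ)

lemma mshift_iterate_apply (z : MarkovShift A) (n m : ℕ) :
    ((mshift A)^[n] z).1 m = z.1 (n + m) := by
  induction n generalizing z with
  | zero => simp
  | succ k ih => rw [Function.iterate_succ_apply, ih, mshift, Nat.add_right_comm]

lemma mcons_eq_iff {i : Fin N} {w z : MarkovShift A} (h : A i (w.1 0) = 1) :
    mcons A i w h = z ↔ z.1 0 = i ∧ w = mshift A z := by
  constructor
  · rintro rfl
    exact ⟨rfl, rfl⟩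
  · rintro ⟨h0, rfl⟩
    refine Subtype.ext (funext fun m => ?_)
    cases m
    exacts [h0.symm, rfl]

lemma mshift_mcons {i : Fin N} {w : MarkovShift A} (h : A i (w.1 0) = 1) :
    mshift A (mcons A i w h) = w :=
  rfl

variable {A}

open Classical in
lemma IsShiftOp.star_apply_basisVec {i : Fin N} {T : MSHilbert A →L[ℂ] MSHilbert A}
    (hT : IsShiftOp A i T) (z : MarkovShift A) :
    star T (basisVec A z) = if z.1 0 = i then basisVec A (mshift A z) else 0 := by
  refine lp.ext (funext fun w => ?_)
  rw [star_apply_basisVec_apply]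
  by_cases hw : A i (w.1 0) = 1
  · rw [(hT w).1 hw]
    have hmcons : z = mcons A i w hw ↔ z.1 0 = i ∧ w = mshift A z :=
      eq_comm.trans (mcons_eq_iff A hw)
    split_ifs with hz <;> simp [basisVec_apply, hmcons, hz]
  · rw [(hT w).2 hw]
    split_ifs with hz
    · have : w ≠ mshift A z := by
        rintro rfl
        exact hw (hz ▸ z.2 0)
      simp [basisVec_apply, this]
    · simp

lemma IsShiftOp.mul_star_mul_self {i : Fin N} {T : MSHilbert A →L[ℂ] MSHilbert A}
    (hT : IsShiftOp A i T) : T * star T * T = T := by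
  refine ext_basisVec A fun z => ?_
  by_cases hz : A i (z.1 0) = 1
  · rw [mul_apply_eq_comp, mul_apply_eq_comp, (hT z).1 hz, hT.star_apply_basisVec,
      if_pos (show (mcons A i z hz).1 0 = i from rfl),
      mshift_mcons, (hT z).1 hz]
  · simp [mul_apply_eq_comp, (hT z).2 hz]

variable {T : Fin N → (MSHilbert A →L[ℂ] MSHilbert A)}

variable (T) in
lemma wordOp_succ (n : ℕ) (ν : ℕ → Fin N) :
    wordOp A T (n + 1) ν = wordOp A T n ν * T (ν n) := by
  simp [wordOp, List.range_succ]

lemma wordOp_apply_basisVec_iterate (hT : IsGenFamily A T) {n : ℕ} {ν : ℕ → Fin N}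
    {z : MarkovShift A} (hz : z.1 ∈ PiNat.cylinder ν n) :
    wordOp A T n ν (basisVec A ((mshift A)^[n] z)) = basisVec A z := by
  induction n with
  | zero => simp [wordOp]
  | succ k ih =>
    have hzk : ((mshift A)^[k] z).1 0 = ν k := by
      rw [mshift_iterate_apply, add_zero, hz k k.lt_succ_self]
    have hadm : A (ν k) (((mshift A)^[k + 1] z).1 0) = 1 := by
      rw [← hzk, Function.iterate_succ_apply']
      exact ((mshift A)^[k] z).2 0
    have hcons : mcons A (ν k) ((mshift A)^[k + 1] z) hadm = (mshift A)^[k] z :=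
      (mcons_eq_iff A hadm).2 ⟨hzk, Function.iterate_succ_apply' _ _ _⟩
    rw [wordOp_succ, mul_apply_eq_comp, (hT (ν k) _).1 hadm, hcons,
      ih (PiNat.cylinder_anti ν k.le_succ hz)]

open Classical in
lemma star_wordOp_apply_basisVec (hT : IsGenFamily A T) (n : ℕ) (ν : ℕ → Fin N)
    (z : MarkovShift A) :
    star (wordOp A T n ν) (basisVec A z) =
      if z.1 ∈ PiNat.cylinder ν n then basisVec A ((mshift A)^[n] z) else 0 := by
  induction n with
  | zero => simp [wordOp]
  | succ k ih =>
    rw [wordOp_succ, star_mul, mul_apply_eq_comp, ih]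
    by_cases hk : z.1 ∈ PiNat.cylinder ν k
    · have hsucc : z.1 ∈ PiNat.cylinder ν (k + 1) ↔ z.1 k = ν k := by
        simp only [PiNat.mem_cylinder_iff, Nat.lt_succ_iff_lt_or_eq]
        exact ⟨fun h => h k (Or.inr rfl), fun h i hi => hi.elim (hk i) (· ▸ h)⟩
      rw [if_pos hk, (hT (ν k)).star_apply_basisVec, mshift_iterate_apply, add_zero, hsucc,
        ← Function.iterate_succ_apply' (mshift A)]
      split_ifs <;> rfl
    · have hsucc : z.1 ∉ PiNat.cylinder ν (k + 1) :=
        fun h => hk (PiNat.cylinder_anti ν k.le_succ h)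
      rw [if_neg hk, if_neg hsucc, map_zero]

lemma wordOp_mul_star {M : C(MarkovShift A, ℂ) → (MSHilbert A →L[ℂ] MSHilbert A)}
    (hT : IsGenFamily A T) (hM : IsMultOp A M) (n : ℕ) (ν : ℕ → Fin N) :
    wordOp A T n ν * star (wordOp A T n ν) =
      M (clopenIndicator ((PiNat.isClopen_cylinder ν n).preimage continuous_subtype_val)) := by
  refine ext_basisVec A fun z => ?_
  rw [mul_apply_eq_comp, star_wordOp_apply_basisVec hT, hM]
  by_cases hz : z.1 ∈ PiNat.cylinder ν n
  · simp [clopenIndicator, hz, wordOp_apply_basisVec_iterate hT hz]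
  · simp [clopenIndicator, hz]

lemma norm_wordOp_le_one (hT : IsGenFamily A T) (n : ℕ) (ν : ℕ → Fin N) :
    ‖wordOp A T n ν‖ ≤ 1 := by
  induction n with
  | zero =>
    simp only [wordOp, List.range_zero, List.map_nil, List.prod_nil]
    exact ContinuousLinearMap.norm_id_le
  | succ k ih =>
    rw [wordOp_succ]
    exact (norm_mul_le _ _).trans (mul_le_one₀ ih (norm_nonneg _)
      (norm_le_one_of_mul_star_mul_self (hT (ν k)).mul_star_mul_self))

end ShiftOperators

section Compressions

variable {N : ℕ} {A : Matrix (Fin N) (Fin N) ℕ}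
  {T : Fin N → (MSHilbert A →L[ℂ] MSHilbert A)} {u : MSHilbert A →L[ℂ] MSHilbert A}

lemma norm_compression_le_one (hT : IsGenFamily A T) (hu : u * star u * u = u) (n : ℕ)
    (μ ν : ℕ → Fin N) : ‖star (wordOp A T n μ) * u * wordOp A T n ν‖ ≤ 1 :=
  calc _ ≤ ‖star (wordOp A T n μ)‖ * ‖u‖ * ‖wordOp A T n ν‖ := norm_mul₃_le
    _ ≤ 1 := by
      rw [norm_star (wordOp A T n μ)]
      exact mul_le_one₀ (mul_le_one₀ (norm_wordOp_le_one hT n μ) (norm_nonneg _)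
        (norm_le_one_of_mul_star_mul_self hu)) (norm_nonneg _) (norm_wordOp_le_one hT n ν)

lemma one_le_norm_compression (hT : IsGenFamily A T) (n : ℕ) (ν : ℕ → Fin N)
    {x : MarkovShift A} (hux : (star u * u) (basisVec A x) = basisVec A x)
    (hfix : (wordOp A T n ν * star (wordOp A T n ν)) (u (basisVec A x)) = u (basisVec A x)) :
    1 ≤ ‖star (wordOp A T n ν) * u * wordOp A T n x.1‖ := by
  set e := basisVec A ((mshift A)^[n] x) with he
  refine one_le_norm_of_star_mul_self_apply_eq _ (he ▸ norm_basisVec A _) ?_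
  have hWx : wordOp A T n x.1 e = basisVec A x :=
    wordOp_apply_basisVec_iterate hT (PiNat.self_mem_cylinder x.1 n)
  calc (star (star (wordOp A T n ν) * u * wordOp A T n x.1) *
        (star (wordOp A T n ν) * u * wordOp A T n x.1)) e
      = star (wordOp A T n x.1) (star u
          ((wordOp A T n ν * star (wordOp A T n ν)) (u (basisVec A x)))) := by
        simp [star_mul, mul_assoc, hWx]
    _ = star (wordOp A T n x.1) ((star u * u) (basisVec A x)) := by rw [hfix]; rfl
    _ = e := by
      rw [hux, star_wordOp_apply_basisVec hT, if_pos (PiNat.self_mem_cylinder x.1 n)]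

end Compressions

theorem norm_compression_eq_one_general
    {N : ℕ} (A : Matrix (Fin N) (Fin N) ℕ)
    (T : Fin N → (MSHilbert A →L[ℂ] MSHilbert A)) (hT : IsGenFamily A T)
    (M : C(MarkovShift A, ℂ) → (MSHilbert A →L[ℂ] MSHilbert A)) (hM : IsMultOp A M)
    (u : MSHilbert A →L[ℂ] MSHilbert A)
    (hupi : u * star u * u = u)
    (Xu Yu : Set (MarkovShift A)) (hXu : IsClopen Xu)
    (χX χY : C(MarkovShift A, ℂ))
    (hχX : ∀ x, χX x = Set.indicator Xu (fun _ => (1 : ℂ)) x)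
    (hχY : ∀ x, χY x = Set.indicator Yu (fun _ => (1 : ℂ)) x)
    (hpu : star u * u = M χX) (hqu : u * star u = M χY)
    (h : Xu ≃ₜ Yu)
    (hh : ∀ g g' : C(MarkovShift A, ℂ),
      (∀ x ∉ Xu, g x = 0) → (∀ y ∉ Yu, g' y = 0) →
      (∀ y : Yu, g' y = g (h.symm y)) →
      u * M g * star u = M g') :
    ∀ (x : MarkovShift A) (hx : x ∈ Xu) (n : ℕ),
      ‖star (wordOp A T n ((h ⟨x, hx⟩ : MarkovShift A)).1) * u * wordOp A T n x.1‖
        = 1 := by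
  intro x hx n
  set y : MarkovShift A := ↑(h ⟨x, hx⟩)
  set χC := clopenIndicator ((PiNat.isClopen_cylinder y.1 n).preimage continuous_subtype_val)
  obtain ⟨g, hgh, hg0⟩ := hXu.exists_continuousMap_extension_by_zero
    ((χC * χY).comp ⟨fun z => (h z : MarkovShift A), by fun_prop⟩)
  have hconj : u * M g * star u = M (χC * χY) :=
    hh g _ hg0 (fun z hz => by simp [hχY, hz]) (fun z => by simp [hgh])
  have hgx : g x = 1 := by simp [hgh ⟨x, hx⟩, χC, clopenIndicator, hχY, y]
  have hux : (star u * u) (basisVec A x) = basisVec A x := by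
    rw [hpu, hM, hχX, Set.indicator_of_mem hx, one_smul]
  refine le_antisymm (norm_compression_le_one hT hupi n _ _)
    (one_le_norm_compression hT n _ hux ?_)
  calc (wordOp A T n y.1 * star (wordOp A T n y.1)) (u (basisVec A x))
      = (M χC * (u * star u) * u) (basisVec A x) := by
        rw [wordOp_mul_star hT hM, mul_assoc, hupi]; rfl
    _ = u (M g ((star u * u) (basisVec A x))) := by
        rw [hqu, hM.mul, ← hconj]; simp only [mul_apply_eq_comp]
    _ = u (basisVec A x) := by rw [hux, hM, hgx, one_smul]

/-- `A` satisfies condition (I); `u ∈ O_A` is a partial isometry with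
`u D_A u^* ⊆ D_A` and `u^* D_A u ⊆ D_A`, `u^*u = M_{χ_{X_u}}`, `uu^* = M_{χ_{Y_u}}` for
clopen `X_u, Y_u`, and `h : X_u → Y_u` is a homeomorphism with `u M_g u^* = M_{g∘h⁻¹}`
for every `g` vanishing off `X_u`.  Then for every `x ∈ X_u` and `y = h(x)`,
`‖T_{y_{[1,n]}}^* u T_{x_{[1,n]}}‖ = 1` for all `n`. -/
theorem norm_compression_eq_one
    {N : ℕ} (hN : 2 ≤ N) (A : Matrix (Fin N) (Fin N) ℕ)
    (hA : ∀ i j, A i j = 0 ∨ A i j = 1) (hI : ConditionI A)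
    (T : Fin N → (MSHilbert A →L[ℂ] MSHilbert A)) (hT : IsGenFamily A T)
    (M : C(MarkovShift A, ℂ) → (MSHilbert A →L[ℂ] MSHilbert A)) (hM : IsMultOp A M)
    (u : MSHilbert A →L[ℂ] MSHilbert A)
    (humem : u ∈ CKalg A T) (hupi : u * star u * u = u)
    (hconj : ∀ f : C(MarkovShift A, ℂ), ∃ g, u * M f * star u = M g)
    (hconj' : ∀ f : C(MarkovShift A, ℂ), ∃ g, star u * M f * u = M g)
    (Xu Yu : Set (MarkovShift A)) (hXu : IsClopen Xu) (hYu : IsClopen Yu)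
    (χX χY : C(MarkovShift A, ℂ))
    (hχX : ∀ x, χX x = Set.indicator Xu (fun _ => (1 : ℂ)) x)
    (hχY : ∀ x, χY x = Set.indicator Yu (fun _ => (1 : ℂ)) x)
    (hpu : star u * u = M χX) (hqu : u * star u = M χY)
    (h : Xu ≃ₜ Yu)
    (hh : ∀ g g' : C(MarkovShift A, ℂ),
      (∀ x ∉ Xu, g x = 0) → (∀ y ∉ Yu, g' y = 0) →
      (∀ y : Yu, g' y = g (h.symm y)) →
      u * M g * star u = M g') :
    ∀ (x : MarkovShift A) (hx : x ∈ Xu) (n : ℕ),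
      ‖star (wordOp A T n ((h ⟨x, hx⟩ : MarkovShift A)).1) * u * wordOp A T n x.1‖
        = 1 :=
  norm_compression_eq_one_general A T hT M hM u hupi Xu Yu hXu χX χY hχX hχY hpu hqu h hh
end
end

section
/- Assume A, B and their transposes A^t, B^t all satisfy Cuntz–Krieger condition (I). If there exists a homeomorphism h : X_A → X_B such that h ∘ [σ_A]_c ∘ h^{-1} = [σ_B]_c, then (X_A, σ_A) and (X_B, σ_B) are topologically orbit equivalent. -/
open Matrix

/-- `(X_A, σ_A)` and `(X_B, σ_B)` are topologically orbit equivalent: there is a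
homeomorphism `h : X_A → X_B` mapping orbits onto orbits, with continuous orbit
cocycles for `h` and for `h⁻¹`. -/
def TopOrbitEquiv {N N' : ℕ} (A : Matrix (Fin N) (Fin N) ℕ)
    (B : Matrix (Fin N') (Fin N') ℕ) : Prop :=
  ∃ h : MarkovShift A ≃ₜ MarkovShift B,
    (∀ x, h '' orb A x = orb B (h x)) ∧
    (∃ k₁ l₁ : MarkovShift A → ℕ, Continuous k₁ ∧ Continuous l₁ ∧
      ∀ x, (mshift B)^[k₁ x] (h (mshift A x)) = (mshift B)^[l₁ x] (h x)) ∧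
    (∃ k₂ l₂ : MarkovShift B → ℕ, Continuous k₂ ∧ Continuous l₂ ∧
      ∀ y, (mshift A)^[k₂ y] (h.symm (mshift B y)) = (mshift A)^[l₂ y] (h.symm y))

/-!
Condition (I) for `Aᵀ` gives every symbol `i` with `A i i = 1` a predecessor `b ≠ i`. With it,
every point of `X_A` has a clopen neighbourhood on which `σ_A` agrees with an element of
`[σ_A]_c`: on a cylinder `[a c]` with `a ≠ c`, `σ_A` maps the cylinder injectively onto a
disjoint clopen set and extends to an involution swapping the two; on `[i i]`, compose the
involutions `σ_A : [b i] ↔ [i]` and `σ_A² : [b i i] ↔ [i]`. Conjugating these local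
representatives by `h`, the continuous cocycles of `h τ h⁻¹` are local continuous cocycles for
`h`, which glue by compactness. The same holds for `h⁻¹`, and continuous cocycles for `h` and
`h⁻¹` make `h` map orbits onto orbits.
-/

open Set Function

theorem IsClopen.continuous_piecewise {X Y : Type*} [TopologicalSpace X] [TopologicalSpace Y]
    {s : Set X} [∀ x, Decidable (x ∈ s)] (hs : IsClopen s) {f g : X → Y}
    (hf : ContinuousOn f s) (hg : ContinuousOn g sᶜ) : Continuous (s.piecewise f g) :=
  _root_.continuous_piecewise (by simp [hs.frontier_eq]) (by rwa [hs.isClosed.closure_eq])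
    (by rwa [hs.isOpen.isClosed_compl.closure_eq])

theorem IsOpenMap.iterate {X : Type*} [TopologicalSpace X] {T : X → X} (hT : IsOpenMap T) :
    ∀ n, IsOpenMap T^[n]
  | 0 => IsOpenMap.id
  | n + 1 => (hT.iterate n).comp hT

section Orbit

variable {X Y : Type*}

def SameOrbit (T : X → X) (y x : X) : Prop :=
  ∃ k l : ℕ, T^[k] y = T^[l] x

variable {T : X → X}

theorem SameOrbit.symm {x y : X} (h : SameOrbit T y x) : SameOrbit T x y :=
  let ⟨k, l, hkl⟩ := h
  ⟨l, k, hkl.symm⟩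

theorem SameOrbit.trans {x y z : X} (hxy : SameOrbit T x y) (hyz : SameOrbit T y z) :
    SameOrbit T x z := by
  obtain ⟨a, b, hab⟩ := hxy
  obtain ⟨c, d, hcd⟩ := hyz
  refine ⟨c + a, b + d, ?_⟩
  rw [iterate_add_apply, hab, ← iterate_add_apply, add_comm, iterate_add_apply, hcd,
    ← iterate_add_apply]

theorem SameOrbit.map {S : X → X} {T : Y → Y} {h : X → Y}
    (hh : ∀ x, SameOrbit T (h (S x)) (h x)) {x y : X} (hyx : SameOrbit S y x) :
    SameOrbit T (h y) (h x) := by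
  have hiter : ∀ n x, SameOrbit T (h (S^[n] x)) (h x) := by
    intro n
    induction n with
    | zero => exact fun x => ⟨0, 0, rfl⟩
    | succ n ih => exact fun x => (ih (S x)).trans (hh x)
  obtain ⟨k, l, hkl⟩ := hyx
  exact (hiter k y).symm.trans (hkl ▸ hiter l x)

theorem Equiv.image_setOf_sameOrbit {S : X → X} {T : Y → Y} (e : X ≃ Y)
    (he : ∀ x, SameOrbit T (e (S x)) (e x)) (he' : ∀ y, SameOrbit S (e.symm (T y)) (e.symm y))
    (x : X) : e '' {y | SameOrbit S y x} = {y | SameOrbit T y (e x)} := by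
  ext y
  refine ⟨?_, fun hy => ⟨e.symm y, ?_, e.apply_symm_apply y⟩⟩
  · rintro ⟨y, hy, rfl⟩
    exact hy.map he
  · simpa using hy.map he'

end Orbit

section Cocycle

variable {X Y : Type*} [TopologicalSpace X]

/-- `τ ∈ [σ_A]_c` is a cocycle for `(τ, id)`, and the cocycle condition of an orbit equivalence
`h` is one for `(h ∘ σ_A, h)`. -/
def HasContinuousCocycleOn (T : Y → Y) (f g : X → Y) (s : Set X) : Prop :=
  ∃ k l : X → ℕ, Continuous k ∧ Continuous l ∧ ∀ x ∈ s, T^[k x] (f x) = T^[l x] (g x)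

variable {T : Y → Y} {f g : X → Y} {s t : Set X}

theorem hasContinuousCocycleOn_univ :
    HasContinuousCocycleOn T f g univ ↔
      ∃ k l : X → ℕ, Continuous k ∧ Continuous l ∧ ∀ x, T^[k x] (f x) = T^[l x] (g x) := by
  simp [HasContinuousCocycleOn]

namespace HasContinuousCocycleOn

theorem sameOrbit (h : HasContinuousCocycleOn T f g s) {x : X} (hx : x ∈ s) :
    SameOrbit T (f x) (g x) :=
  let ⟨k, l, _, _, hkl⟩ := h
  ⟨k x, l x, hkl x hx⟩

theorem mono (h : HasContinuousCocycleOn T f g s) (hts : t ⊆ s) :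
    HasContinuousCocycleOn T f g t :=
  let ⟨k, l, hk, hl, hkl⟩ := h
  ⟨k, l, hk, hl, fun x hx => hkl x (hts hx)⟩

theorem congr {f' : X → Y} (h : HasContinuousCocycleOn T f' g s) (hf : EqOn f f' s) :
    HasContinuousCocycleOn T f g s :=
  let ⟨k, l, hk, hl, hkl⟩ := h
  ⟨k, l, hk, hl, fun x hx => hf hx ▸ hkl x hx⟩

theorem comp {Z : Type*} [TopologicalSpace Z] (h : HasContinuousCocycleOn T f g s) {φ : Z → X}
    (hφ : Continuous φ) : HasContinuousCocycleOn T (f ∘ φ) (g ∘ φ) (φ ⁻¹' s) :=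
  let ⟨k, l, hk, hl, hkl⟩ := h
  ⟨k ∘ φ, l ∘ φ, hk.comp hφ, hl.comp hφ, fun z hz => hkl (φ z) hz⟩

theorem trans {e : X → Y} (hfg : HasContinuousCocycleOn T f g s)
    (hge : HasContinuousCocycleOn T g e s) : HasContinuousCocycleOn T f e s := by
  obtain ⟨a, b, ha, hb, hab⟩ := hfg
  obtain ⟨c, d, hc, hd, hcd⟩ := hge
  refine ⟨c + a, b + d, hc.add ha, hb.add hd, fun x hx => ?_⟩
  simp only [Pi.add_apply]
  rw [iterate_add_apply, hab x hx, ← iterate_add_apply, add_comm, iterate_add_apply,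
    hcd x hx, ← iterate_add_apply]

theorem union (hs : IsClopen s) (h₁ : HasContinuousCocycleOn T f g s)
    (h₂ : HasContinuousCocycleOn T f g t) : HasContinuousCocycleOn T f g (s ∪ t) := by
  classical
  obtain ⟨k₁, l₁, hk₁, hl₁, h₁⟩ := h₁
  obtain ⟨k₂, l₂, hk₂, hl₂, h₂⟩ := h₂
  refine ⟨s.piecewise k₁ k₂, s.piecewise l₁ l₂,
    hs.continuous_piecewise hk₁.continuousOn hk₂.continuousOn,
    hs.continuous_piecewise hl₁.continuousOn hl₂.continuousOn, fun x hx => ?_⟩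
  by_cases hxs : x ∈ s
  · simpa [hxs] using h₁ x hxs
  · simpa [hxs] using h₂ x (hx.resolve_left hxs)

theorem of_forall_isClopen [CompactSpace X]
    (H : ∀ x, ∃ U, IsClopen U ∧ x ∈ U ∧ HasContinuousCocycleOn T f g U) :
    HasContinuousCocycleOn T f g univ := by
  choose U hU hxU hcoc using H
  obtain ⟨t, ht⟩ := isCompact_univ.elim_finite_subcover U (fun x => (hU x).isOpen)
    fun x _ => mem_iUnion.2 ⟨x, hxU x⟩
  classical
  refine HasContinuousCocycleOn.mono ?_ ht
  clear ht
  induction t using Finset.induction_on with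
  | empty => exact ⟨0, 0, continuous_const, continuous_const, by simp⟩
  | insert x t _ ih =>
    rw [Finset.set_biUnion_insert]
    exact (hcoc x).union (hU x) ih

end HasContinuousCocycleOn

end Cocycle

section Swap

variable {X : Type*} [Nonempty X] {g : X → X} {U : Set X}

open scoped Classical in
noncomputable def clopenSwap (g : X → X) (U : Set X) : X → X :=
  (g '' U).piecewise (invFunOn g U) (U.piecewise g id)

theorem clopenSwap_of_mem (hdisj : Disjoint U (g '' U)) {x : X} (hx : x ∈ U) :
    clopenSwap g U x = g x := by
  simp [clopenSwap, hx, hdisj.notMem_of_mem_left hx]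

theorem clopenSwap_of_mem_image {x : X} (hx : x ∈ g '' U) :
    clopenSwap g U x = invFunOn g U x := by
  simp [clopenSwap, hx]

theorem clopenSwap_of_notMem {x : X} (hxU : x ∉ U) (hxV : x ∉ g '' U) :
    clopenSwap g U x = x := by
  simp [clopenSwap, hxU, hxV]

theorem involutive_clopenSwap (hinj : InjOn g U) (hdisj : Disjoint U (g '' U)) :
    Involutive (clopenSwap g U) := by
  intro x
  by_cases hxV : x ∈ g '' U
  · have hmem : invFunOn g U x ∈ U := invFunOn_mem hxV
    rw [clopenSwap_of_mem_image hxV, clopenSwap_of_mem hdisj hmem, invFunOn_eq hxV]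
  by_cases hxU : x ∈ U
  · rw [clopenSwap_of_mem hdisj hxU, clopenSwap_of_mem_image (mem_image_of_mem g hxU),
      hinj.leftInvOn_invFunOn hxU]
  · rw [clopenSwap_of_notMem hxU hxV, clopenSwap_of_notMem hxU hxV]

variable [TopologicalSpace X]

theorem continuousOn_invFunOn_image [CompactSpace X] [T2Space X] (hg : Continuous g)
    (hU : IsClosed U) (hinj : InjOn g U) : ContinuousOn (invFunOn g U) (g '' U) := by
  refine continuousOn_iff_isClosed.2 fun t ht => ⟨g '' (U ∩ t),
    ((hU.inter ht).isCompact.image hg).isClosed, ?_⟩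
  ext x
  constructor
  · rintro ⟨hxt, hxV⟩
    exact ⟨⟨_, ⟨invFunOn_mem hxV, hxt⟩, invFunOn_eq hxV⟩, hxV⟩
  · rintro ⟨⟨u, ⟨huU, hut⟩, rfl⟩, hxV⟩
    exact ⟨by rwa [mem_preimage, hinj.leftInvOn_invFunOn huU], hxV⟩

theorem continuous_clopenSwap [CompactSpace X] [T2Space X] (hg : Continuous g)
    (hU : IsClopen U) (hV : IsOpen (g '' U)) (hinj : InjOn g U) :
    Continuous (clopenSwap g U) := by
  classical
  exact IsClopen.continuous_piecewise ⟨(hU.isClosed.isCompact.image hg).isClosed, hV⟩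
    (continuousOn_invFunOn_image hg hU.isClosed hinj)
    (hU.continuous_piecewise hg.continuousOn continuousOn_id).continuousOn

theorem exists_homeomorph_eqOn_iterate [CompactSpace X] [T2Space X] {T : X → X}
    (hT : Continuous T) (hT' : IsOpenMap T) (hU : IsClopen U) {n : ℕ} (hinj : InjOn T^[n] U)
    (hdisj : Disjoint U (T^[n] '' U)) :
    ∃ τ : X ≃ₜ X, Involutive τ ∧ EqOn τ T^[n] U ∧ HasContinuousCocycleOn T τ id univ := by
  classical
  set V := T^[n] '' U
  have hV : IsClopen V :=
    ⟨(hU.isClosed.isCompact.image (hT.iterate n)).isClosed, hT'.iterate n U hU.isOpen⟩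
  have hinv := involutive_clopenSwap hinj hdisj
  have hcont := continuous_clopenSwap (hT.iterate n) hU hV.isOpen hinj
  let τ : X ≃ₜ X := ⟨hinv.toPerm _, hcont, hcont⟩
  have hτ : ⇑τ = clopenSwap T^[n] U := rfl
  refine ⟨τ, hτ ▸ hinv, fun x hx => hτ ▸ clopenSwap_of_mem hdisj hx,
    V.piecewise (fun _ => n) 0, U.piecewise (fun _ => n) 0,
    hV.continuous_piecewise continuousOn_const continuousOn_const,
    hU.continuous_piecewise continuousOn_const continuousOn_const, fun x _ => ?_⟩
  by_cases hxV : x ∈ V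
  · have hxU : x ∉ U := hdisj.notMem_of_mem_right hxV
    simp [hτ, hxV, hxU, clopenSwap_of_mem_image hxV, invFunOn_eq hxV]
  by_cases hxU : x ∈ U
  · simp [hτ, hxV, hxU, clopenSwap_of_mem hdisj hxU]
  · simp [hτ, hxV, hxU, clopenSwap_of_notMem hxU hxV]

end Swap

namespace MarkovShift

variable {N : ℕ} {A : Matrix (Fin N) (Fin N) ℕ}

instance : CompactSpace (MarkovShift A) := by
  refine isCompact_iff_compactSpace.1 (IsClosed.isCompact
    (s := {x : ℕ → Fin N | ∀ n, A (x n) (x (n + 1)) = 1}) ?_)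
  rw [ofPred_forall]
  exact isClosed_iInter fun n => (isClosed_discrete {p : Fin N × Fin N | A p.1 p.2 = 1}).preimage
    (f := fun x : ℕ → Fin N => (x n, x (n + 1))) (by fun_prop)

theorem isClopen_setOf_coord_eq (n : ℕ) (c : Fin N) :
    IsClopen {z : MarkovShift A | z.1 n = c} :=
  (isClopen_discrete {c}).preimage ((continuous_apply n).comp continuous_subtype_val)

variable (A) in
theorem continuous_mshift : Continuous (mshift A) :=
  continuous_induced_rng.2 <| continuous_pi fun n =>
    (continuous_apply (n + 1)).comp continuous_subtype_val

theorem mshift_iterate_apply (n : ℕ) (z : MarkovShift A) (i : ℕ) :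
    ((mshift A)^[n] z).1 i = z.1 (i + n) := by
  induction n generalizing z with
  | zero => rfl
  | succ n ih => exact ih (mshift A z)

def cons (a : Fin N) (z : MarkovShift A) (h : A a (z.1 0) = 1) : MarkovShift A :=
  ⟨fun | 0 => a | n + 1 => z.1 n, fun | 0 => h | n + 1 => z.2 n⟩

theorem mshift_cons (a : Fin N) (z : MarkovShift A) (h : A a (z.1 0) = 1) :
    mshift A (cons a z h) = z :=
  rfl

variable (A) in
theorem isOpenMap_mshift : IsOpenMap (mshift A) := by
  intro V hV
  rw [isOpen_iff_mem_nhds]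
  rintro _ ⟨x, hxV, rfl⟩
  obtain ⟨W, hW, rfl⟩ := isOpen_induced_iff.1 hV
  obtain ⟨_, ⟨y, n, rfl⟩, hxy, hsub⟩ :=
    (PiNat.isTopologicalBasis_cylinders _).exists_subset_of_mem_open hxV hW
  rw [PiNat.mem_cylinder_iff_eq] at hxy
  refine Filter.mem_of_superset (((PiNat.isOpen_cylinder _ (mshift A x).1 (n + 1)).preimage
    continuous_subtype_val).mem_nhds (PiNat.self_mem_cylinder _ _)) ?_
  intro z hz
  have hadm : A (x.1 0) (z.1 0) = 1 := by rw [hz 0 n.succ_pos]; exact x.2 0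
  refine ⟨cons (x.1 0) z hadm, hsub ?_, mshift_cons _ _ _⟩
  rw [← hxy]
  rintro (_ | i) hi
  · rfl
  · exact hz i (by omega)

theorem injOn_iterate_mshift {U : Set (MarkovShift A)} {n : ℕ}
    (hU : ∀ u ∈ U, ∀ v ∈ U, ∀ i < n, u.1 i = v.1 i) : InjOn (mshift A)^[n] U := by
  intro u hu v hv huv
  refine Subtype.ext (funext fun i => ?_)
  by_cases hi : i < n
  · exact hU u hu v hv i hi
  · obtain ⟨j, rfl⟩ := Nat.exists_eq_add_of_le' (not_lt.1 hi)
    rw [← mshift_iterate_apply, ← mshift_iterate_apply, huv]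

theorem mem_topFullGroup_iff {τ : MarkovShift A ≃ₜ MarkovShift A} :
    τ ∈ topFullGroup A ↔ HasContinuousCocycleOn (mshift A) τ id univ := by
  rw [hasContinuousCocycleOn_univ]
  refine ⟨And.right, fun h => ⟨fun x => ?_, h⟩⟩
  obtain ⟨k, l, -, -, hkl⟩ := h
  exact ⟨k x, l x, hkl x⟩

theorem trans_mem_topFullGroup {τ ρ : MarkovShift A ≃ₜ MarkovShift A}
    (hτ : τ ∈ topFullGroup A) (hρ : ρ ∈ topFullGroup A) : τ.trans ρ ∈ topFullGroup A := by
  rw [mem_topFullGroup_iff] at hτ hρ ⊢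
  exact (hρ.comp τ.continuous).trans hτ

theorem exists_mem_topFullGroup_eqOn_iterate [Nonempty (MarkovShift A)]
    {U : Set (MarkovShift A)} (hU : IsClopen U) {n : ℕ}
    (hinj : ∀ u ∈ U, ∀ v ∈ U, ∀ i < n, u.1 i = v.1 i)
    (hdisj : Disjoint U ((mshift A)^[n] '' U)) :
    ∃ τ ∈ topFullGroup A, Involutive τ ∧ EqOn τ (mshift A)^[n] U := by
  obtain ⟨τ, hinv, hτU, hcoc⟩ := exists_homeomorph_eqOn_iterate (continuous_mshift A)
    (isOpenMap_mshift A) hU (injOn_iterate_mshift hinj) hdisj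
  exact ⟨τ, mem_topFullGroup_iff.2 hcoc, hinv, hτU⟩

end MarkovShift

namespace MarkovShift

variable {N : ℕ} {A : Matrix (Fin N) (Fin N) ℕ}

theorem exists_pred_ne_of_conditionI_transpose (hI : ConditionI Aᵀ) {i : Fin N}
    (hii : A i i = 1) : ∃ b, b ≠ i ∧ A b i = 1 := by
  by_contra! hno
  let ξ : MarkovShift Aᵀ := ⟨fun _ => i, fun _ => hii⟩
  refine hI ξ ?_
  convert (isClopen_setOf_coord_eq (A := Aᵀ) 0 i).isOpen
  ext y
  refine ⟨fun hy => hy ▸ rfl, fun hy0 => Subtype.ext (funext fun n => ?_)⟩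
  induction n with
  | zero => exact hy0
  | succ n ih =>
    have hy : A (y.1 (n + 1)) (y.1 n) = 1 := y.2 n
    rw [ih] at hy
    by_contra hne
    exact hno _ hne hy

theorem exists_mem_topFullGroup_eqOn_mshift_of_ne (x : MarkovShift A) (hx : x.1 0 ≠ x.1 1) :
    ∃ U, IsClopen U ∧ x ∈ U ∧ ∃ τ ∈ topFullGroup A, EqOn τ (mshift A) U := by
  have : Nonempty (MarkovShift A) := ⟨x⟩
  let U := {z : MarkovShift A | z.1 0 = x.1 0 ∧ z.1 1 = x.1 1}
  have hU : IsClopen U := (isClopen_setOf_coord_eq 0 _).inter (isClopen_setOf_coord_eq 1 _)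
  obtain ⟨τ, hτ, -, hτU⟩ := exists_mem_topFullGroup_eqOn_iterate (n := 1) hU
    (fun u hu v hv i hi => by rw [Nat.lt_one_iff.1 hi, hu.1, hv.1])
    (disjoint_left.2 fun z hz ⟨u, hu, huz⟩ => hx (by rw [← hz.1, ← huz]; exact hu.2))
  exact ⟨U, hU, ⟨rfl, rfl⟩, τ, hτ, hτU⟩

theorem exists_mem_topFullGroup_eqOn_mshift_of_eq (hI : ConditionI Aᵀ) (x : MarkovShift A)
    (hx : x.1 0 = x.1 1) :
    ∃ U, IsClopen U ∧ x ∈ U ∧ ∃ τ ∈ topFullGroup A, EqOn τ (mshift A) U := by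
  have : Nonempty (MarkovShift A) := ⟨x⟩
  set i := x.1 0
  have hii : A i i = 1 := by simpa [← hx] using x.2 0
  obtain ⟨b, hbi, hb⟩ := exists_pred_ne_of_conditionI_transpose hI hii
  obtain ⟨τ, hτ, hτinv, hτU⟩ := exists_mem_topFullGroup_eqOn_iterate (A := A) (n := 1)
    ((isClopen_setOf_coord_eq 0 b).inter (isClopen_setOf_coord_eq 1 i))
    (fun u hu v hv j hj => by rw [Nat.lt_one_iff.1 hj, hu.1, hv.1])
    (disjoint_left.2 fun z hz ⟨u, hu, huz⟩ => hbi (by rw [← hz.1, ← huz]; exact hu.2))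
  obtain ⟨ρ, hρ, -, hρU⟩ := exists_mem_topFullGroup_eqOn_iterate (A := A) (n := 2)
    ((isClopen_setOf_coord_eq 0 b).inter
      ((isClopen_setOf_coord_eq 1 i).inter (isClopen_setOf_coord_eq 2 i)))
    (fun u hu v hv j hj => by interval_cases j <;> simp_all)
    (disjoint_left.2 fun z hz ⟨u, hu, huz⟩ => hbi (by rw [← hz.1, ← huz]; exact hu.2.2))
  refine ⟨{z | z.1 0 = i ∧ z.1 1 = i},
    (isClopen_setOf_coord_eq 0 i).inter (isClopen_setOf_coord_eq 1 i), ⟨rfl, hx.symm⟩,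
    τ.trans ρ, trans_mem_topFullGroup hτ hρ, fun z hz => ?_⟩
  let u := cons b z (by rw [hz.1]; exact hb)
  have hτu : τ u = z := hτU (x := u) ⟨rfl, hz.1⟩
  have hτz : τ z = u := by rw [← hτu]; exact hτinv u
  show ρ (τ z) = mshift A z
  rw [hτz, hρU ⟨rfl, hz.1, hz.2⟩]
  rfl

theorem exists_mem_topFullGroup_eqOn_mshift (hI : ConditionI Aᵀ) (x : MarkovShift A) :
    ∃ U, IsClopen U ∧ x ∈ U ∧ ∃ τ ∈ topFullGroup A, EqOn τ (mshift A) U := by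
  by_cases hx : x.1 0 = x.1 1
  · exact exists_mem_topFullGroup_eqOn_mshift_of_eq hI x hx
  · exact exists_mem_topFullGroup_eqOn_mshift_of_ne x hx

theorem hasContinuousCocycleOn_of_conj {N' : ℕ} {B : Matrix (Fin N') (Fin N') ℕ}
    (hI : ConditionI Aᵀ) (h : MarkovShift A ≃ₜ MarkovShift B)
    (hconj : ∀ τ ∈ topFullGroup A, (h.symm.trans τ).trans h ∈ topFullGroup B) :
    HasContinuousCocycleOn (mshift B) (h ∘ mshift A) h univ := by
  refine HasContinuousCocycleOn.of_forall_isClopen fun x => ?_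
  obtain ⟨U, hU, hxU, τ, hτ, hτU⟩ := exists_mem_topFullGroup_eqOn_mshift hI x
  refine ⟨U, hU, hxU, ?_⟩
  have hcoc := (mem_topFullGroup_iff.1 (hconj τ hτ)).comp h.continuous
  refine (hcoc.mono (subset_univ U)).congr fun z hz => ?_
  simp [hτU hz]

end MarkovShift

theorem topOrbitEquiv_of_conj_topFullGroup_general
    {N N' : ℕ} (A : Matrix (Fin N) (Fin N) ℕ) (B : Matrix (Fin N') (Fin N') ℕ)
    (hIAt : ConditionI Aᵀ) (hIBt : ConditionI Bᵀ)
    (hconj : ∃ h : MarkovShift A ≃ₜ MarkovShift B,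
      (fun τ : MarkovShift A ≃ₜ MarkovShift A => (h.symm.trans τ).trans h) ''
        topFullGroup A = topFullGroup B) :
    TopOrbitEquiv A B := by
  obtain ⟨h, hconj⟩ := hconj
  have hfwd : ∀ τ ∈ topFullGroup A, (h.symm.trans τ).trans h ∈ topFullGroup B :=
    fun τ hτ => hconj ▸ mem_image_of_mem _ hτ
  have hbwd : ∀ ρ ∈ topFullGroup B, (h.symm.symm.trans ρ).trans h.symm ∈ topFullGroup A := by
    rintro _ hρ
    obtain ⟨τ, hτ, rfl⟩ := hconj ▸ hρ
    convert hτ using 1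
    ext
    simp
  have hcocA := MarkovShift.hasContinuousCocycleOn_of_conj hIAt h hfwd
  have hcocB := MarkovShift.hasContinuousCocycleOn_of_conj hIBt h.symm hbwd
  refine ⟨h, fun x => h.toEquiv.image_setOf_sameOrbit (fun x => hcocA.sameOrbit (mem_univ x))
    (fun y => hcocB.sameOrbit (mem_univ y)) x,
    hasContinuousCocycleOn_univ.1 hcocA, hasContinuousCocycleOn_univ.1 hcocB⟩

/-- assume `A, B, Aᵀ, Bᵀ` all satisfy condition (I).  If some
homeomorphism `h : X_A → X_B` conjugates `[σ_A]_c` onto `[σ_B]_c`, then `(X_A, σ_A)`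
and `(X_B, σ_B)` are topologically orbit equivalent. -/
theorem topOrbitEquiv_of_conj_topFullGroup
    {N N' : ℕ} (A : Matrix (Fin N) (Fin N) ℕ) (B : Matrix (Fin N') (Fin N') ℕ)
    (hA : ∀ i j, A i j = 0 ∨ A i j = 1) (hB : ∀ i j, B i j = 0 ∨ B i j = 1)
    (hIA : ConditionI A) (hIAt : ConditionI Aᵀ)
    (hIB : ConditionI B) (hIBt : ConditionI Bᵀ)
    (hconj : ∃ h : MarkovShift A ≃ₜ MarkovShift B,
      (fun τ : MarkovShift A ≃ₜ MarkovShift A => (h.symm.trans τ).trans h) ''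
        topFullGroup A = topFullGroup B) :
    TopOrbitEquiv A B :=
  topOrbitEquiv_of_conj_topFullGroup_general A B hIAt hIBt hconj
end
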